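/- Let X be a Banach space and let Y be a Banach space whose dual space Y* is uniformly convex (equivalently, Y is uniformly smooth). If the pair (X, Y) has the Bishop–Phelps–Bollobás property for operators (BPBp), then the pair (X, Y) has the Bishop–Phelps–Bollobás–Zizler property (BPBZp). -/

import Mathlib

/-- The Bishop–Phelps–Bollobás property for operators (BPBp) for a pair of normed spaces. -/
def BPBp (𝕂 : Type*) [RCLike 𝕂] (X Y : Type*) [NormedAddCommGroup X] [NormedSpace 𝕂 X]
    [NormedAddCommGroup Y] [NormedSpace 𝕂 Y] : Prop :=
  ∀ ε : ℝ, 0 < ε → ∃ η : ℝ, 0 < η ∧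
    ∀ (T : X →L[𝕂] Y) (x₀ : X),
      ‖T‖ = 1 → ‖x₀‖ = 1 → 1 - η < ‖T x₀‖ →
      ∃ (S : X →L[𝕂] Y) (x₁ : X),
        ‖S‖ = 1 ∧ ‖x₁‖ = 1 ∧ ‖S x₁‖ = 1 ∧ ‖x₁ - x₀‖ < ε ∧ ‖S - T‖ < ε

/-- The Bishop–Phelps–Bollobás–Zizler property (BPBZp) for a pair of normed spaces. -/
def BPBZp (𝕂 : Type*) [RCLike 𝕂] (X Y : Type*) [NormedAddCommGroup X] [NormedSpace 𝕂 X]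
    [NormedAddCommGroup Y] [NormedSpace 𝕂 Y] : Prop :=
  ∀ ε : ℝ, 0 < ε → ∃ η : ℝ, 0 < η ∧
    ∀ (T : X →L[𝕂] Y) (x₀ : X) (y₀ : Y →L[𝕂] 𝕂),
      ‖T‖ = 1 → ‖x₀‖ = 1 → ‖y₀‖ = 1 → 1 - η < ‖y₀ (T x₀)‖ →
      ∃ (S : X →L[𝕂] Y) (x₁ : X) (y₁ : Y →L[𝕂] 𝕂),
        ‖S‖ = 1 ∧ ‖x₁‖ = 1 ∧ ‖y₁‖ = 1 ∧ ‖y₁ (S x₁)‖ = 1 ∧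
        ‖x₁ - x₀‖ < ε ∧ ‖y₁ - y₀‖ < ε ∧ ‖S - T‖ < ε

/-!
Apply the BPBp to `T` and `x₀` to get `S` attaining its norm at `x₁`; then `y₀` still almost norms
`S x₁`. Rotating a functional that norms `S x₁` so that it adds to `y₀` in phase at `S x₁` gives
`y₁` with `‖y₀ + y₁‖` close to `2`, and uniform convexity of `Y*` forces `y₁` to be close to `y₀`.
-/

theorem exists_norm_eq_one_norm_add_eq {E : Type*} [NormedAddCommGroup E] [NormedSpace ℝ E]
    [Nontrivial E] (c : E) : ∃ u : E, ‖u‖ = 1 ∧ ‖c + u‖ = ‖c‖ + 1 := by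
  rcases eq_or_ne c 0 with rfl | hc
  · obtain ⟨u, hu⟩ := exists_norm_eq E zero_le_one
    exact ⟨u, hu, by simp [hu]⟩
  · have hu : ‖‖c‖⁻¹ • c‖ = 1 := by
      rw [norm_smul, norm_inv, norm_norm, inv_mul_cancel₀ (norm_ne_zero_iff.2 hc)]
    refine ⟨‖c‖⁻¹ • c, hu, ?_⟩
    rw [(SameRay.sameRay_nonneg_smul_right c (inv_nonneg.2 (norm_nonneg c))).norm_add, hu]

theorem ContinuousLinearMap.norm_apply_sub_apply_le {𝕜 E F : Type*} [NontriviallyNormedField 𝕜]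
    [SeminormedAddCommGroup E] [NormedSpace 𝕜 E] [SeminormedAddCommGroup F] [NormedSpace 𝕜 F]
    {S T : E →L[𝕜] F} {x₀ x₁ : E} (hT : ‖T‖ ≤ 1) (hx₁ : ‖x₁‖ ≤ 1) :
    ‖S x₁ - T x₀‖ ≤ ‖S - T‖ + ‖x₁ - x₀‖ :=
  calc ‖S x₁ - T x₀‖ = ‖(S - T) x₁ + T (x₁ - x₀)‖ := by simp
    _ ≤ ‖S - T‖ * ‖x₁‖ + ‖T‖ * ‖x₁ - x₀‖ :=
      norm_add_le_of_le ((S - T).le_opNorm x₁) (T.le_opNorm _)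
    _ ≤ ‖S - T‖ + ‖x₁ - x₀‖ := by
      gcongr
      · exact mul_le_of_le_one_right (norm_nonneg _) hx₁
      · exact mul_le_of_le_one_left (norm_nonneg _) hT

namespace StrongDual

variable {𝕂 Y : Type*} [RCLike 𝕂] [NormedAddCommGroup Y] [NormedSpace 𝕂 Y]

theorem exists_norm_eq_one_norm_apply_eq_one_norm_apply_add_one_le (g : StrongDual 𝕂 Y) {z : Y}
    (hz : ‖z‖ = 1) : ∃ f : StrongDual 𝕂 Y, ‖f‖ = 1 ∧ ‖f z‖ = 1 ∧ ‖g z‖ + 1 ≤ ‖g + f‖ := by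
  obtain ⟨f₀, hf₀, hf₀z⟩ := exists_dual_vector 𝕂 z (by rw [hz]; exact one_ne_zero)
  obtain ⟨u, hu, hgu⟩ := exists_norm_eq_one_norm_add_eq (g z)
  have hfz : (u • f₀) z = u := by simp [hf₀z, hz]
  refine ⟨u • f₀, by rw [norm_smul, hu, hf₀, one_mul], by rw [hfz, hu], ?_⟩
  calc ‖g z‖ + 1 = ‖(g + u • f₀) z‖ := by rw [add_apply, hfz, hgu]
    _ ≤ ‖g + u • f₀‖ := by simpa [hz] using (g + u • f₀).le_opNorm z

theorem exists_pos_forall_exists_norming_near [UniformConvexSpace (StrongDual 𝕂 Y)] {ε : ℝ}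
    (hε : 0 < ε) : ∃ δ > 0, ∀ (y₀ : StrongDual 𝕂 Y) (z : Y), ‖y₀‖ = 1 → ‖z‖ = 1 →
      1 - δ < ‖y₀ z‖ → ∃ y₁ : StrongDual 𝕂 Y, ‖y₁‖ = 1 ∧ ‖y₁ z‖ = 1 ∧ ‖y₁ - y₀‖ < ε := by
  obtain ⟨δ, hδ, hconvex⟩ := exists_forall_sphere_dist_add_le_two_sub (StrongDual 𝕂 Y) hε
  refine ⟨δ, hδ, fun y₀ z hy₀ hz hy₀z => ?_⟩
  obtain ⟨y₁, hy₁, hy₁z, hadd⟩ := y₀.exists_norm_eq_one_norm_apply_eq_one_norm_apply_add_one_le hz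
  refine ⟨y₁, hy₁, hy₁z, lt_of_not_ge fun hfar => ?_⟩
  have := hconvex hy₀ hy₁ (by rwa [norm_sub_rev])
  linarith

end StrongDual

theorem bpbzp_of_bpbp_of_uniformConvexSpace_dual_general (𝕂 : Type*) [RCLike 𝕂] (X Y : Type*)
    [NormedAddCommGroup X] [NormedSpace 𝕂 X]
    [NormedAddCommGroup Y] [NormedSpace 𝕂 Y]
    [UniformConvexSpace (StrongDual 𝕂 Y)]
    (h : BPBp 𝕂 X Y) : BPBZp 𝕂 X Y := by
  intro ε hε
  obtain ⟨δ, hδ, hnorming⟩ := StrongDual.exists_pos_forall_exists_norming_near (𝕂 := 𝕂) (Y := Y) hε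
  obtain ⟨η, hη, hbpb⟩ := h (min ε (δ / 4)) (by positivity)
  refine ⟨min η (δ / 2), by positivity, fun T x₀ y₀ hT hx₀ hy₀ hy₀Tx₀ => ?_⟩
  have hy₀le : ∀ y, ‖y₀ y‖ ≤ ‖y‖ := fun y => by simpa [hy₀] using y₀.le_opNorm y
  obtain ⟨S, x₁, hS, hx₁, hSx₁, hx, hST⟩ :=
    hbpb T x₀ hT hx₀ (by linarith [min_le_left η (δ / 2), hy₀le (T x₀)])
  have hy₀Sx₁ : 1 - δ < ‖y₀ (S x₁)‖ := by
    have hdist : ‖T x₀ - S x₁‖ ≤ ‖S - T‖ + ‖x₁ - x₀‖ := by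
      rw [norm_sub_rev]; exact ContinuousLinearMap.norm_apply_sub_apply_le hT.le hx₁.le
    have hmove : ‖y₀ (T x₀)‖ - ‖y₀ (S x₁)‖ ≤ ‖y₀ (T x₀ - S x₁)‖ := by
      rw [map_sub]; exact norm_sub_norm_le _ _
    linarith [hy₀le (T x₀ - S x₁), min_le_right η (δ / 2), min_le_right ε (δ / 4)]
  obtain ⟨y₁, hy₁, hy₁Sx₁, hy⟩ := hnorming y₀ (S x₁) hy₀ hSx₁ hy₀Sx₁
  exact ⟨S, x₁, y₁, hS, hx₁, hy₁, hy₁Sx₁, hx.trans_le (min_le_left _ _), hy,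
    hST.trans_le (min_le_left _ _)⟩

/-- If `Y*` is uniformly convex (equivalently, `Y` is uniformly smooth) and `(X, Y)` has the
BPBp, then `(X, Y)` has the BPBZp. -/
theorem bpbzp_of_bpbp_of_uniformConvexSpace_dual (𝕂 : Type*) [RCLike 𝕂] (X Y : Type*)
    [NormedAddCommGroup X] [NormedSpace 𝕂 X] [CompleteSpace X]
    [NormedAddCommGroup Y] [NormedSpace 𝕂 Y] [CompleteSpace Y]
    [UniformConvexSpace (StrongDual 𝕂 Y)]
    (h : BPBp 𝕂 X Y) : BPBZp 𝕂 X Y :=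
  bpbzp_of_bpbp_of_uniformConvexSpace_dual_general 𝕂 X Y h
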